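/- Let (Ω, F, μ) be a probability space, A, B sub-σ-algebras, c = ψ'(A,B), and p ∈ [1,∞]. Then for every A-measurable ξ ∈ L^p with Eξ = 0, one has ‖E(ξ | B)‖_p ≤ (1 - c) ‖ξ‖_p. -/

import Mathlib

/-!
Write `c = ψ'(𝒜, ℬ)`. By definition `μ(A ∩ B) ≥ c μ(A) μ(B)`, which integrates to
`E(f | ℬ) ≥ c E f` for every nonnegative `𝒜`-measurable `f`. Hence `T f = E(f | ℬ) - c E f` is a
positive operator on `𝒜`-measurable functions with `T 1 = 1 - c` and `T ξ = E(ξ | ℬ)` when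
`E ξ = 0`. Applying `T` to the tangent-line minorants `r t^(r-1) |x| - (r-1) t^r ≤ |x|^r`, over
countably many `t`, yields the pointwise Jensen-type bound
`|E(ξ | ℬ)|^r ≤ (1 - c)^(r-1) T(|ξ|^r)`, and integrating it gives the `L^r` bound since
`E T(|ξ|^r) = (1 - c) E |ξ|^r`. For `p = ∞` one applies `T` to `‖ξ‖_∞ ± ξ ≥ 0` instead.
-/

open MeasureTheory
open scoped ENNReal

/-- The dependence coefficient
`ψ'(𝒜, ℬ) = inf { μ(A ∩ B) / (μ A * μ B) : A ∈ 𝒜, B ∈ ℬ, μ A > 0, μ B > 0 }`,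
interpreted as `1` when no such pair of sets exists. -/
noncomputable def psi' {Ω : Type*} {m0 : MeasurableSpace Ω} (μ : Measure Ω)
    (mA mB : MeasurableSpace Ω) : ℝ :=
  open Classical in
  letI S : Set ℝ := {r | ∃ A B, MeasurableSet[mA] A ∧ MeasurableSet[mB] B ∧
    0 < μ A ∧ 0 < μ B ∧ r = (μ (A ∩ B)).toReal / ((μ A).toReal * (μ B).toReal)}
  if S.Nonempty then sInf S else 1

open Filter

theorem rpow_sub_one_mul_self {x r : ℝ} (hx : 0 ≤ x) (hr : r ≠ 0) : x ^ (r - 1) * x = x ^ r := by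
  rw [← Real.rpow_add_one' hx (by simpa using hr), sub_add_cancel]

theorem mul_rpow_sub_one_mul_le {r t y : ℝ} (hr : 1 ≤ r) (ht : 0 ≤ t) (hy : 0 ≤ y) :
    r * t ^ (r - 1) * y ≤ y ^ r + (r - 1) * t ^ r := by
  have hr0 : r ≠ 0 := by positivity
  have h := Real.geom_mean_le_arith_mean2_weighted (inv_nonneg.2 (zero_le_one.trans hr))
    (sub_nonneg.2 (inv_le_one_of_one_le₀ hr)) (Real.rpow_nonneg hy r) (Real.rpow_nonneg ht r)
    (add_sub_cancel _ _)
  rw [Real.rpow_rpow_inv hy hr0, ← Real.rpow_mul ht, mul_sub, mul_inv_cancel₀ hr0, mul_one] at h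
  have := mul_le_mul_of_nonneg_left h (zero_le_one.trans hr)
  field_simp at this
  linarith

theorem rpow_le_rpow_sub_one_mul_of_forall {r d v F : ℝ} (hr : 1 ≤ r) (hd : 0 ≤ d) (hv : 0 ≤ v)
    (h : ∀ t, 0 ≤ t → r * t ^ (r - 1) * v - d * ((r - 1) * t ^ r) ≤ F) :
    v ^ r ≤ d ^ (r - 1) * F := by
  rcases hd.eq_or_lt with rfl | hd
  · rcases hr.eq_or_lt with rfl | hr
    · simpa using h 1 zero_le_one
    -- for `d = 0` the left side of `h` grows like `t ^ (r - 1)` unless `v = 0`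
    obtain rfl : v = 0 := by
      by_contra hv0
      obtain ⟨t, ht, ht0⟩ := (((tendsto_rpow_atTop (sub_pos.2 hr)).const_mul_atTop
        (mul_pos (zero_lt_one.trans hr) (hv.lt_of_ne' hv0))).eventually_gt_atTop F |>.and
        (eventually_ge_atTop 0)).exists
      linarith [h t ht0, show r * v * t ^ (r - 1) = r * t ^ (r - 1) * v by ring]
    simp [Real.zero_rpow (zero_lt_one.trans hr).ne', Real.zero_rpow (sub_pos.2 hr).ne']
  · -- the tangent point `t = v / d` is optimal
    have hr0 : r ≠ 0 := by positivity
    have hs : 0 ≤ v / d := div_nonneg hv hd.le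
    have hdv : d * (v / d) = v := mul_div_cancel₀ v hd.ne'
    calc v ^ r = d ^ (r - 1) * ((v / d) ^ (r - 1) * v) := by
          rw [← rpow_sub_one_mul_self hv hr0, ← mul_assoc, ← Real.mul_rpow hd.le hs, hdv]
      _ = d ^ (r - 1) * (r * (v / d) ^ (r - 1) * v - d * ((r - 1) * (v / d) ^ r)) := by
          rw [← rpow_sub_one_mul_self hs hr0]
          linear_combination (d ^ (r - 1) * (r - 1) * (v / d) ^ (r - 1)) * hdv
      _ ≤ d ^ (r - 1) * F := by gcongr; exact h _ hs

theorem eLpNorm_le_ofReal_mul_of_integral_rpow_le {α : Type*} {m : MeasurableSpace α}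
    {ν : Measure α} {f g : α → ℝ} {p : ℝ≥0∞} (hp0 : p ≠ 0) (hp : p ≠ ∞) {d : ℝ} (hd : 0 ≤ d)
    (hf : MemLp f p ν) (hg : MemLp g p ν)
    (h : ∫ x, |g x| ^ p.toReal ∂ν ≤ d ^ p.toReal * ∫ x, |f x| ^ p.toReal ∂ν) :
    eLpNorm g p ν ≤ ENNReal.ofReal d * eLpNorm f p ν := by
  have hr : p.toReal ≠ 0 := ENNReal.toReal_ne_zero.2 ⟨hp0, hp⟩
  have hf_nonneg : 0 ≤ ∫ x, |f x| ^ p.toReal ∂ν := integral_nonneg fun _ => by positivity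
  rw [hf.eLpNorm_eq_integral_rpow_norm hp0 hp, hg.eLpNorm_eq_integral_rpow_norm hp0 hp,
    ← ENNReal.ofReal_mul hd]
  refine ENNReal.ofReal_le_ofReal ?_
  simp only [Real.norm_eq_abs]
  calc (∫ x, |g x| ^ p.toReal ∂ν) ^ p.toReal⁻¹
      ≤ (d ^ p.toReal * ∫ x, |f x| ^ p.toReal ∂ν) ^ p.toReal⁻¹ :=
        Real.rpow_le_rpow (integral_nonneg fun _ => by positivity) h (by positivity)
    _ = d * (∫ x, |f x| ^ p.toReal ∂ν) ^ p.toReal⁻¹ := by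
        rw [Real.mul_rpow (by positivity) hf_nonneg, Real.rpow_rpow_inv hd hr]

section Psi

variable {Ω : Type*} {m0 : MeasurableSpace Ω} {μ : Measure Ω} {mA mB : MeasurableSpace Ω}

theorem psi'_nonneg : 0 ≤ psi' μ mA mB := by
  rw [psi']
  split_ifs
  · exact Real.sInf_nonneg <| by rintro _ ⟨A, B, -, -, -, -, rfl⟩; positivity
  · exact zero_le_one

theorem psi'_le_measureReal_inter_div {A B : Set Ω} (hA : MeasurableSet[mA] A)
    (hB : MeasurableSet[mB] B) (hA0 : 0 < μ A) (hB0 : 0 < μ B) :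
    psi' μ mA mB ≤ μ.real (A ∩ B) / (μ.real A * μ.real B) := by
  have hmem := (⟨A, B, hA, hB, hA0, hB0, rfl⟩ : ∃ A' B', MeasurableSet[mA] A' ∧
    MeasurableSet[mB] B' ∧ 0 < μ A' ∧ 0 < μ B' ∧
    (μ (A ∩ B)).toReal / ((μ A).toReal * (μ B).toReal) =
      (μ (A' ∩ B')).toReal / ((μ A').toReal * (μ B').toReal))
  rw [psi', if_pos ⟨_, hmem⟩]
  exact csInf_le ⟨0, by rintro _ ⟨A, B, -, -, -, -, rfl⟩; positivity⟩ hmem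

theorem psi'_le_one [IsProbabilityMeasure μ] : psi' μ mA mB ≤ 1 := by
  simpa using psi'_le_measureReal_inter_div (μ := μ) (@MeasurableSet.univ _ mA)
    (@MeasurableSet.univ _ mB) (by simp) (by simp)

variable [IsFiniteMeasure μ]

theorem psi'_mul_measureReal_le {A B : Set Ω} (hA : MeasurableSet[mA] A)
    (hB : MeasurableSet[mB] B) :
    psi' μ mA mB * μ.real A * μ.real B ≤ μ.real (A ∩ B) := by
  rcases eq_zero_or_pos (μ A) with hA0 | hA0
  · simp [Measure.real, hA0]
  rcases eq_zero_or_pos (μ B) with hB0 | hB0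
  · simp [Measure.real, hB0]
  rw [mul_assoc, ← le_div_iff₀ (by simp [measureReal_def, ENNReal.toReal_pos, hA0.ne', hB0.ne'])]
  exact psi'_le_measureReal_inter_div hA hB hA0 hB0

theorem psi'_smul_trim_le_restrict_trim (hA : mA ≤ m0) {B : Set Ω} (hB : MeasurableSet[mB] B) :
    ENNReal.ofReal (psi' μ mA mB * μ.real B) • μ.trim hA ≤ (μ.restrict B).trim hA := by
  refine Measure.le_iff.mpr fun s hs => ?_
  rw [Measure.smul_apply, smul_eq_mul, trim_measurableSet_eq hA hs, trim_measurableSet_eq hA hs,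
    Measure.restrict_apply (hA s hs), ← ofReal_measureReal, ← ofReal_measureReal,
    ← ENNReal.ofReal_mul (mul_nonneg psi'_nonneg measureReal_nonneg)]
  exact ENNReal.ofReal_le_ofReal <| by linarith [psi'_mul_measureReal_le (μ := μ) hs hB]

theorem psi'_mul_integral_le_setIntegral (hA : mA ≤ m0) {f : Ω → ℝ}
    (hf : StronglyMeasurable[mA] f) (hfi : Integrable f μ) (hf0 : 0 ≤ᵐ[μ] f) {B : Set Ω}
    (hB : MeasurableSet[mB] B) :
    psi' μ mA mB * μ.real B * ∫ x, f x ∂μ ≤ ∫ x in B, f x ∂μ := by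
  have hc : 0 ≤ psi' μ mA mB * μ.real B := mul_nonneg psi'_nonneg measureReal_nonneg
  calc psi' μ mA mB * μ.real B * ∫ x, f x ∂μ
      = ∫ x, f x ∂(ENNReal.ofReal (psi' μ mA mB * μ.real B) • μ.trim hA) := by
        rw [integral_smul_measure, ← integral_trim hA hf, ENNReal.toReal_ofReal hc, smul_eq_mul]
    _ ≤ ∫ x, f x ∂(μ.restrict B).trim hA :=
        integral_mono_measure (psi'_smul_trim_le_restrict_trim hA hB)
          (stronglyMeasurable_const.ae_le_trim_of_stronglyMeasurable hA hf
            (ae_restrict_of_ae hf0))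
          (hfi.restrict.trim hA hf)
    _ = ∫ x in B, f x ∂μ := (integral_trim hA hf).symm

theorem psi'_mul_integral_le_condExp (hA : mA ≤ m0) (hB : mB ≤ m0) {f : Ω → ℝ}
    (hf : StronglyMeasurable[mA] f) (hfi : Integrable f μ) (hf0 : 0 ≤ᵐ[μ] f) :
    ∀ᵐ ω ∂μ, psi' μ mA mB * ∫ x, f x ∂μ ≤ μ[f|mB] ω := by
  refine ae_le_of_ae_le_trim (hm := hB) <| ae_le_of_forall_setIntegral_le (integrable_const _)
    (integrable_condExp.trim hB stronglyMeasurable_condExp) fun s hs _ => ?_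
  rw [← setIntegral_trim hB stronglyMeasurable_const hs,
    ← setIntegral_trim hB stronglyMeasurable_condExp hs, setIntegral_condExp hB hfi hs,
    setIntegral_const, smul_eq_mul, mul_comm, mul_right_comm]
  exact psi'_mul_integral_le_setIntegral hA hf hfi hf0 hs

end Psi

section Probability

variable {Ω : Type*} {m0 : MeasurableSpace Ω} {μ : Measure Ω} [IsProbabilityMeasure μ]
  {mA mB : MeasurableSpace Ω}

theorem mul_condExp_sub_le_condExp_sub (hA : mA ≤ m0) (hB : mB ≤ m0) {φ ξ : Ω → ℝ}
    (hφ : StronglyMeasurable[mA] φ) (hφi : Integrable φ μ) (hξ : StronglyMeasurable[mA] ξ)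
    (hξi : Integrable ξ μ) (hmean : ∫ ω, ξ ω ∂μ = 0) {a b : ℝ}
    (hle : ∀ᵐ ω ∂μ, a * ξ ω - b ≤ φ ω) :
    ∀ᵐ ω ∂μ, a * μ[ξ|mB] ω - (1 - psi' μ mA mB) * b ≤ μ[φ|mB] ω - psi' μ mA mB * ∫ x, φ x ∂μ := by
  have hgap_int : Integrable (φ - a • ξ) μ := hφi.sub (hξi.smul a)
  have hgap : ∀ᵐ ω ∂μ, psi' μ mA mB * ∫ x, (φ - a • ξ + fun _ => b : Ω → ℝ) x ∂μ
      ≤ μ[φ - a • ξ + fun _ => b|mB] ω :=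
    psi'_mul_integral_le_condExp hA hB ((hφ.sub (hξ.const_smul a)).add stronglyMeasurable_const)
      (hgap_int.add (integrable_const b)) (hle.mono fun ω h => by simp; linarith)
  have hint : ∫ x, (φ - a • ξ + fun _ => b : Ω → ℝ) x ∂μ = ∫ x, φ x ∂μ + b := by
    have h_int : Integrable (fun x => φ x - a * ξ x) μ := hφi.sub (hξi.const_mul a)
    simp only [Pi.add_apply, Pi.sub_apply, Pi.smul_apply, smul_eq_mul]
    rw [integral_add h_int (integrable_const b), integral_sub hφi (hξi.const_mul a),
      integral_const_mul, hmean]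
    simp
  filter_upwards [hgap, condExp_add hgap_int (integrable_const b) mB,
    condExp_sub hφi (hξi.smul a) mB, condExp_smul a ξ mB] with ω h h_add h_sub h_smul
  rw [hint, h_add, Pi.add_apply, h_sub, Pi.sub_apply, h_smul, condExp_const hB] at h
  simp only [Pi.smul_apply, smul_eq_mul] at h
  linarith

theorem abs_mul_condExp_sub_le_condExp_sub (hA : mA ≤ m0) (hB : mB ≤ m0) {φ ξ : Ω → ℝ}
    (hφ : StronglyMeasurable[mA] φ) (hφi : Integrable φ μ) (hξ : StronglyMeasurable[mA] ξ)
    (hξi : Integrable ξ μ) (hmean : ∫ ω, ξ ω ∂μ = 0) {a b : ℝ}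
    (hle : ∀ᵐ ω ∂μ, |a * ξ ω| - b ≤ φ ω) :
    ∀ᵐ ω ∂μ, |a * μ[ξ|mB] ω| - (1 - psi' μ mA mB) * b
      ≤ μ[φ|mB] ω - psi' μ mA mB * ∫ x, φ x ∂μ := by
  have h_pos := mul_condExp_sub_le_condExp_sub hA hB hφ hφi hξ hξi hmean
    (hle.mono fun ω h => (sub_le_sub_right (le_abs_self _) b).trans h)
  have h_neg := mul_condExp_sub_le_condExp_sub hA hB hφ hφi hξ.neg hξi.neg
    (by rw [integral_neg', hmean, neg_zero]) (a := a) (b := b)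
    (hle.mono fun ω h => (sub_le_sub_right (by simpa using neg_le_abs (a * ξ ω)) b).trans h)
  filter_upwards [h_pos, h_neg, condExp_neg ξ mB] with ω h_pos h_neg h_condExp_neg
  rw [h_condExp_neg, Pi.neg_apply] at h_neg
  rcases abs_cases (a * μ[ξ|mB] ω) with ⟨h, -⟩ | ⟨h, -⟩ <;> linarith

theorem integral_abs_condExp_rpow_le (hA : mA ≤ m0) (hB : mB ≤ m0) {ξ : Ω → ℝ} {r : ℝ}
    (hr : 1 ≤ r) (hξ : StronglyMeasurable[mA] ξ) (hξi : Integrable ξ μ)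
    (hξr : Integrable (fun ω => |ξ ω| ^ r) μ) (hmean : ∫ ω, ξ ω ∂μ = 0) :
    ∫ ω, |μ[ξ|mB] ω| ^ r ∂μ ≤ (1 - psi' μ mA mB) ^ r * ∫ ω, |ξ ω| ^ r ∂μ := by
  set c := psi' μ mA mB
  set F : Ω → ℝ := fun ω => μ[fun x => |ξ x| ^ r|mB] ω - c * ∫ x, |ξ x| ^ r ∂μ
  have hφ : StronglyMeasurable[mA] fun ω => |ξ ω| ^ r :=
    (continuous_abs.rpow_const fun _ => Or.inr (zero_le_one.trans hr)).comp_stronglyMeasurable hξ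
  have h_tangent : ∀ᵐ ω ∂μ, ∀ q : ℚ,
      r * |(q : ℝ)| ^ (r - 1) * |μ[ξ|mB] ω| - (1 - c) * ((r - 1) * |(q : ℝ)| ^ r) ≤ F ω := by
    refine ae_all_iff.2 fun q => ?_
    have ha : 0 ≤ r * |(q : ℝ)| ^ (r - 1) := by positivity
    filter_upwards [abs_mul_condExp_sub_le_condExp_sub hA hB hφ hξr hξ hξi hmean
      (b := (r - 1) * |(q : ℝ)| ^ r) (ae_of_all _ fun ω => by
        rw [abs_mul, abs_of_nonneg ha]
        linarith [mul_rpow_sub_one_mul_le hr (abs_nonneg (q : ℝ)) (abs_nonneg (ξ ω))])]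
      with ω h
    rwa [abs_mul, abs_of_nonneg ha] at h
  have h_jensen : ∀ᵐ ω ∂μ, |μ[ξ|mB] ω| ^ r ≤ (1 - c) ^ (r - 1) * F ω := by
    filter_upwards [h_tangent] with ω h
    refine rpow_le_rpow_sub_one_mul_of_forall hr (sub_nonneg.2 psi'_le_one) (abs_nonneg _)
      fun t ht => ?_
    have := Rat.denseRange_cast.induction_on
      (p := fun t : ℝ => r * |t| ^ (r - 1) * |μ[ξ|mB] ω| - (1 - c) * ((r - 1) * |t| ^ r) ≤ F ω) t
      (isClosed_le (by fun_prop (disch := linarith)) continuous_const) h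
    rwa [abs_of_nonneg ht] at this
  calc ∫ ω, |μ[ξ|mB] ω| ^ r ∂μ ≤ ∫ ω, (1 - c) ^ (r - 1) * F ω ∂μ :=
        integral_mono_of_nonneg (ae_of_all _ fun _ => by positivity)
          ((integrable_condExp.sub (integrable_const _)).const_mul _) h_jensen
    _ = (1 - c) ^ r * ∫ ω, |ξ ω| ^ r ∂μ := by
        rw [integral_const_mul, integral_sub integrable_condExp (integrable_const _),
          integral_condExp hB, integral_const, probReal_univ, one_smul,
          ← rpow_sub_one_mul_self (sub_nonneg.2 psi'_le_one) (by positivity : r ≠ 0)]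
        ring

theorem eLpNorm_top_condExp_le (hA : mA ≤ m0) (hB : mB ≤ m0) {ξ : Ω → ℝ}
    (hξ : StronglyMeasurable[mA] ξ) (hξ_top : MemLp ξ ∞ μ) (hmean : ∫ ω, ξ ω ∂μ = 0) :
    eLpNorm (μ[ξ|mB]) ∞ μ ≤ ENNReal.ofReal (1 - psi' μ mA mB) * eLpNorm ξ ∞ μ := by
  set M := (eLpNorm ξ ∞ μ).toReal
  have hM : ∀ᵐ ω ∂μ, |ξ ω| ≤ M := by
    filter_upwards [ae_le_eLpNormEssSup (f := ξ) (μ := μ)] with ω h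
    simpa [M, eLpNorm_exponent_top] using ENNReal.toReal_mono hξ_top.2.ne h
  have h := abs_mul_condExp_sub_le_condExp_sub hA hB stronglyMeasurable_const (integrable_const M)
    hξ (hξ_top.integrable le_top) hmean (a := 1) (b := 0) (by simpa using hM)
  calc eLpNorm (μ[ξ|mB]) ∞ μ ≤ ENNReal.ofReal ((1 - psi' μ mA mB) * M) := by
        rw [eLpNorm_exponent_top]
        refine eLpNormEssSup_le_of_ae_bound (h.mono fun ω hω => ?_)
        simp only [condExp_const hB, integral_const, probReal_univ, one_smul, one_mul, mul_zero,
          sub_zero] at hω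
        rw [Real.norm_eq_abs]
        linarith
    _ ≤ ENNReal.ofReal (1 - psi' μ mA mB) * eLpNorm ξ ∞ μ := by
        rw [ENNReal.ofReal_mul (sub_nonneg.2 psi'_le_one)]
        exact mul_le_mul_right ENNReal.ofReal_toReal_le _

end Probability

/-- If `ξ` is `𝒜`-measurable, in `L^p`, and has zero mean, then
`‖E(ξ | ℬ)‖_p ≤ (1 - ψ'(𝒜, ℬ)) ‖ξ‖_p`. -/
theorem eLpNorm_condexp_le {Ω : Type*} {m0 : MeasurableSpace Ω}
    (μ : Measure Ω) [IsProbabilityMeasure μ]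
    (mA mB : MeasurableSpace Ω) (hA : mA ≤ m0) (hB : mB ≤ m0)
    (p : ℝ≥0∞) (hp : 1 ≤ p) (ξ : Ω → ℝ)
    (hmeas : StronglyMeasurable[mA] ξ) (hmem : MemLp ξ p μ)
    (hmean : ∫ ω, ξ ω ∂μ = 0) :
    eLpNorm (μ[ξ|mB]) p μ ≤ ENNReal.ofReal (1 - psi' μ mA mB) * eLpNorm ξ p μ := by
  rcases eq_or_ne p ∞ with rfl | hp_top
  · exact eLpNorm_top_condExp_le hA hB hmeas hmem hmean
  have hp0 : p ≠ 0 := (zero_lt_one.trans_le hp).ne'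
  have hr : 1 ≤ p.toReal := by
    simpa using ENNReal.toReal_mono hp_top hp
  refine eLpNorm_le_ofReal_mul_of_integral_rpow_le hp0 hp_top (sub_nonneg.2 psi'_le_one) hmem
    (hmem.condExp hp) (integral_abs_condExp_rpow_le hA hB hr hmeas (hmem.integrable hp) ?_ hmean)
  simpa only [Real.norm_eq_abs] using hmem.integrable_norm_rpow hp0 hp_top
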